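/- arXiv:1801.10346 — 2 statements merged into one kernel-verified Lean document; each statement's English description precedes it below -/
import Mathlib

section
/- Let h ∈ (0,1), k ≥ 1, K > 0, and let P be a Borel probability measure on ℝ^d supported in B̄(0,K), giving no mass to any sphere ∂B̄(x,r) and such that P({y : ⟨y,v⟩ = c_{P,h}(v)}) = 0 for every unit vector v. Let M ⊂ B(0,K) satisfy P(M) = 1, and let d_{P,h,k} be a k-PDTM of P. Then ∫(d_{P,h,k}²(u) − d_{P,h}²(u)) dP(u) ≥ 0, and for every ε > 0 such that M can be covered by k closed balls of radius ε with centers in M, ∫(d_{P,h,k}²(u) − d_{P,h}²(u)) dP(u) ≤ 2 ε ζ_{P,h}(ε), where ζ_{P,h}(ε) := sup{‖m(P_{x,h}) − m(P_{y,h})‖ : x, y ∈ M, ‖x − y‖ ≤ ε}. -/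
open MeasureTheory ENNReal Set Metric

noncomputable section

/-- `d`-dimensional Euclidean space. -/
abbrev Ed (d : ℕ) : Type := EuclideanSpace ℝ (Fin d)

variable {d : ℕ}

/-- A Borel probability measure is sub-Gaussian with variance `V²` if
`Q {‖x‖ > t} ≤ exp (−t²/(2V²))` for all `t > V`. -/
def IsSubG (Q : Measure (Ed d)) (V : ℝ) : Prop :=
  ∀ t : ℝ, V < t → Q {x : Ed d | t < ‖x‖} ≤ ENNReal.ofReal (Real.exp (-(t ^ 2) / (2 * V ^ 2)))

/-- `δ_{P,l}(x) = inf {r > 0 | P (B̄(x,r)) > l}`. -/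
def dtmRadius (P : Measure (Ed d)) (l : ℝ) (x : Ed d) : ℝ :=
  sInf {r : ℝ | 0 < r ∧ ENNReal.ofReal l < P (closedBall x r)}

/-- The distance to the measure `P` with mass parameter `h`. -/
def dtm (P : Measure (Ed d)) (h : ℝ) (x : Ed d) : ℝ :=
  Real.sqrt ((1 / h) * ∫ l in (0:ℝ)..h, (dtmRadius P l x) ^ 2)

/-- `c_{P,h}(v) = sup {c | P {y | ⟨y,v⟩ > c} > h}`. -/
def cInf (P : Measure (Ed d)) (h : ℝ) (v : Ed d) : ℝ :=
  sSup {c : ℝ | ENNReal.ofReal h < P {y : Ed d | c < (inner ℝ y v : ℝ)}}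

/-- `𝒫_{x,h}(P)`: probability measures `(1/h)·Q` with `Q` a sub-measure of `P` of total mass `h`,
coinciding with `P` on the open ball `B(x, δ_{P,h}(x))` and supported on the closed ball. -/
def PlocPt (P : Measure (Ed d)) (h : ℝ) (x : Ed d) : Set (Measure (Ed d)) :=
  {μ | ∃ Q : Measure (Ed d),
    μ = (ENNReal.ofReal h)⁻¹ • Q ∧ Q ≤ P ∧ Q Set.univ = ENNReal.ofReal h ∧
    (∀ A : Set (Ed d), A ⊆ ball x (dtmRadius P h x) → Q A = P A) ∧
    Q ((closedBall x (dtmRadius P h x))ᶜ) = 0}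

/-- `𝒫_{v∞,h}(P)`: probability measures `(1/h)·Q` with `Q` a sub-measure of `P` of total mass `h`,
coinciding with `P` on the open half-space `H(v, c_{P,h}(v))` and giving no mass to
`{y | ⟨y,v⟩ < c_{P,h}(v)}`. -/
def PlocInf (P : Measure (Ed d)) (h : ℝ) (v : Ed d) : Set (Measure (Ed d)) :=
  {μ | ∃ Q : Measure (Ed d),
    μ = (ENNReal.ofReal h)⁻¹ • Q ∧ Q ≤ P ∧ Q Set.univ = ENNReal.ofReal h ∧
    (∀ A : Set (Ed d), A ⊆ {y : Ed d | cInf P h v < (inner ℝ y v : ℝ)} → Q A = P A) ∧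
    Q {y : Ed d | (inner ℝ y v : ℝ) < cInf P h v} = 0}

/-- Mean of a measure. -/
def mMean (μ : Measure (Ed d)) : Ed d := ∫ u, u ∂μ

/-- Variance of a measure. -/
def mVar (μ : Measure (Ed d)) : ℝ := ∫ u, ‖u - mMean μ‖ ^ 2 ∂μ

/-- The set `M_h(P)` of all means of localized sub-measures of `P`. -/
def Mset (P : Measure (Ed d)) (h : ℝ) : Set (Ed d) :=
  {m | (∃ x : Ed d, ∃ μ ∈ PlocPt P h x, m = mMean μ) ∨
       (∃ v : Ed d, ‖v‖ = 1 ∧ ∃ μ ∈ PlocInf P h v, m = mMean μ)}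

/-- A center is either a point of `ℝ^d` or a point at infinity `v∞` for a unit vector `v`. -/
def ExtPt (d : ℕ) : Type := Ed d ⊕ {v : Ed d // ‖v‖ = 1}

/-- Localized measures at an extended point. -/
def PlocExt (P : Measure (Ed d)) (h : ℝ) : ExtPt d → Set (Measure (Ed d))
  | Sum.inl x => PlocPt P h x
  | Sum.inr v => PlocInf P h v.1

/-- A `k`-center for `P`: centers `t i` with localized measures `μ i ∈ 𝒫_{t i,h}(P)`. -/
def IsKCenter (P : Measure (Ed d)) (h : ℝ) (k : ℕ)
    (t : Fin k → ExtPt d) (μ : Fin k → Measure (Ed d)) : Prop :=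
  ∀ i, μ i ∈ PlocExt P h (t i)

/-- The risk of a `k`-center. -/
def risk (P : Measure (Ed d)) (k : ℕ) (μ : Fin k → Measure (Ed d)) : ℝ :=
  ∫ u, (⨅ i : Fin k, (‖u - mMean (μ i)‖ ^ 2 + mVar (μ i))) ∂P

/-- `f` is a `k`-PDTM of `P`: the square root of the power function of a risk-minimizing
`k`-center. -/
def IsKPDTM (P : Measure (Ed d)) (h : ℝ) (k : ℕ) (f : Ed d → ℝ) : Prop :=
  ∃ (t : Fin k → ExtPt d) (μ : Fin k → Measure (Ed d)),
    IsKCenter P h k t μ ∧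
    (∀ (t' : Fin k → ExtPt d) (μ' : Fin k → Measure (Ed d)),
      IsKCenter P h k t' μ' → risk P k μ ≤ risk P k μ') ∧
    ∀ x, f x = Real.sqrt (⨅ i : Fin k, (‖x - mMean (μ i)‖ ^ 2 + mVar (μ i)))

/-- `f` is an `ε`-approximate `k`-PDTM of `P`. -/
def IsEpsKPDTM (P : Measure (Ed d)) (h : ℝ) (k : ℕ) (ε : ℝ) (f : Ed d → ℝ) : Prop :=
  ∃ (t : Fin k → ExtPt d) (μ : Fin k → Measure (Ed d)),
    IsKCenter P h k t μ ∧
    (∀ (t' : Fin k → ExtPt d) (μ' : Fin k → Measure (Ed d)),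
      IsKCenter P h k t' μ' → risk P k μ ≤ risk P k μ' + ε) ∧
    ∀ x, f x = Real.sqrt (⨅ i : Fin k, (‖x - mMean (μ i)‖ ^ 2 + mVar (μ i)))

/-- `ω²_{P,h}(θ) = sup_x (d_{P,h}²(x) − ‖x−θ‖²)`, as an extended nonnegative real. -/
def omega2 (P : Measure (Ed d)) (h : ℝ) (θ : Ed d) : ℝ≥0∞ :=
  ⨆ x : Ed d, ENNReal.ofReal ((dtm P h x) ^ 2 - ‖x - θ‖ ^ 2)

/-- When `P` puts no mass on spheres, the unique element of `𝒫_{x,h}(P)`. -/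
def locMeasure (P : Measure (Ed d)) (h : ℝ) (x : Ed d) : Measure (Ed d) :=
  (ENNReal.ofReal h)⁻¹ • P.restrict (ball x (dtmRadius P h x))

/-- The `Lᵖ`-Wasserstein distance. -/
def Wdist (p : ℝ) (P Q : Measure (Ed d)) : ℝ :=
  sInf {w | ∃ π : Measure (Ed d × Ed d),
    π.map Prod.fst = P ∧ π.map Prod.snd = Q ∧
    w = (∫ y, ‖y.1 - y.2‖ ^ p ∂π) ^ (1 / p)}

/-- The support of a measure. -/
def msupport (P : Measure (Ed d)) : Set (Ed d) :=
  {x : Ed d | ∀ r : ℝ, 0 < r → 0 < P (ball x r)}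

end

/-
For every sub-measure `Q ≤ P` of mass `h`,
`d²_{P,h}(x) ≤ ‖x - m(Q/h)‖² + v(Q/h) = h⁻¹ ∫ ‖y - x‖² dQ(y)`, with equality for the local
measure `P_{x,h}`. Indeed, the quantile function `l ↦ δ_{P,l}(x)` on `(0, h]` has the law of
`‖· - x‖` under `P` restricted to `B(x, δ_{P,h}(x))`, which turns `d²_{P,h}(x)` into
`h⁻¹ ∫_{B(x, δ_{P,h}(x))} ‖y - x‖² dP(y)`; and among sub-measures of `P` of mass `h`, this
restriction minimizes the integral of `‖· - x‖²` (bathtub principle).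

So `d²_{P,h}` lies below the power function of every `k`-center, which gives the lower bound.
For the upper bound, the `k`-PDTM has smaller risk than the `k`-center formed by the local
measures at the centers `cᵢ` of the covering. The difference of the power functions of
`P_{cᵢ,h}` and `P_{u,h}` is affine with gradient `2 (m(P_{u,h}) - m(P_{cᵢ,h}))` and is
nonpositive at `cᵢ` by minimality, so at `u ∈ M` with `‖u - cᵢ‖ ≤ ε` it is at most
`2 ε ζ_{P,h}(ε)`, while the power function of `P_{u,h}` at `u` is `d²_{P,h}(u)`.
-/

open Filter Topology

section DtmRadius

variable {d : ℕ} {P : Measure (Ed d)} {l r : ℝ} {x : Ed d}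

lemma dtmRadius_nonneg (P : Measure (Ed d)) (l : ℝ) (x : Ed d) : 0 ≤ dtmRadius P l x :=
  Real.sInf_nonneg fun _ hr => hr.1.le

lemma dtmRadius_le_of_lt_measure (hr : 0 < r) (hlr : ENNReal.ofReal l < P (closedBall x r)) :
    dtmRadius P l x ≤ r :=
  csInf_le ⟨0, fun _ hs => hs.1.le⟩ ⟨hr, hlr⟩

lemma measure_closedBall_le_of_lt_dtmRadius (hr : r < dtmRadius P l x) :
    P (closedBall x r) ≤ ENNReal.ofReal l := by
  rcases lt_or_ge r 0 with hr0 | hr0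
  · simp [closedBall_eq_empty.2 hr0]
  obtain ⟨r', hrr', hr'⟩ := exists_between hr
  calc P (closedBall x r) ≤ P (closedBall x r') :=
        measure_mono (closedBall_subset_closedBall hrr'.le)
    _ ≤ ENNReal.ofReal l :=
        not_lt.1 fun hlr' => hr'.not_ge (dtmRadius_le_of_lt_measure (by linarith) hlr')

lemma measure_ball_dtmRadius_le : P (ball x (dtmRadius P l x)) ≤ ENNReal.ofReal l := by
  set δ := dtmRadius P l x
  have hball : ⋃ n : ℕ, closedBall x (δ - 1 / (n + 1)) = ball x δ := by
    refine Subset.antisymm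
      (iUnion_subset fun n => closedBall_subset_ball (sub_lt_self _ Nat.one_div_pos_of_nat))
      fun y hy => ?_
    obtain ⟨n, hn⟩ := exists_nat_one_div_lt (sub_pos.2 (mem_ball.1 hy))
    exact mem_iUnion.2 ⟨n, mem_closedBall.2 (by linarith)⟩
  have hmono : Monotone fun n : ℕ => closedBall x (δ - 1 / (n + 1)) := fun m n hmn =>
    closedBall_subset_closedBall (by gcongr)
  rw [← hball, hmono.measure_iUnion]
  exact iSup_le fun n =>
    measure_closedBall_le_of_lt_dtmRadius (sub_lt_self _ Nat.one_div_pos_of_nat)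

variable [IsProbabilityMeasure P]

lemma exists_lt_measure_closedBall (hl : l < 1) (x : Ed d) :
    ∃ r, 0 < r ∧ ENNReal.ofReal l < P (closedBall x r) := by
  have hlim : Tendsto (fun n : ℕ => P (closedBall x n)) atTop (𝓝 1) := by
    rw [← measure_univ (μ := P), ← iUnion_closedBall_nat x]
    exact tendsto_measure_iUnion_atTop fun m n hmn => closedBall_subset_closedBall (by simpa)
  obtain ⟨n, hn, hn1⟩ := ((hlim.eventually (lt_mem_nhds (ENNReal.ofReal_lt_one.2 hl))).and
    (eventually_ge_atTop 1)).exists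
  exact ⟨n, by exact_mod_cast hn1, hn⟩

lemma dtmRadius_mono {l₁ l₂ : ℝ} (hl₂ : l₂ < 1) (hl : l₁ ≤ l₂) :
    dtmRadius P l₁ x ≤ dtmRadius P l₂ x :=
  csInf_le_csInf ⟨0, fun _ hr => hr.1.le⟩ (exists_lt_measure_closedBall hl₂ x)
    fun _ hr => ⟨hr.1, (ENNReal.ofReal_le_ofReal hl).trans_lt hr.2⟩

lemma lt_measure_closedBall_of_dtmRadius_lt (hl : l < 1) (hr : dtmRadius P l x < r) :
    ENNReal.ofReal l < P (closedBall x r) := by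
  obtain ⟨s, hs, hsr⟩ := exists_lt_of_csInf_lt (exists_lt_measure_closedBall hl x) hr
  exact hs.2.trans_le (measure_mono (closedBall_subset_closedBall hsr.le))

lemma le_measure_closedBall_dtmRadius (hl : l < 1) :
    ENNReal.ofReal l ≤ P (closedBall x (dtmRadius P l x)) := by
  have hlim := tendsto_measure_biInter_gt (μ := P) (s := closedBall x) (a := dtmRadius P l x)
    (fun _ _ => measurableSet_closedBall.nullMeasurableSet)
    (fun _ _ _ hij => closedBall_subset_closedBall hij) ⟨_, lt_add_one _, measure_ne_top _ _⟩
  rw [biInter_gt_closedBall] at hlim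
  exact ge_of_tendsto hlim (eventually_nhdsWithin_of_forall fun _ hr =>
    (lt_measure_closedBall_of_dtmRadius_lt hl hr).le)

lemma lt_dtmRadius_of_measure_lt (hl : l < 1) (hr : P (closedBall x r) < ENNReal.ofReal l) :
    r < dtmRadius P l x :=
  not_le.1 fun hδr => (le_measure_closedBall_dtmRadius hl).not_gt
    (hr.trans_le' (measure_mono (closedBall_subset_closedBall hδr)))

lemma measure_ball_dtmRadius (hsph : ∀ (x : Ed d) (r : ℝ), P (sphere x r) = 0) (hl : l < 1) :
    P (ball x (dtmRadius P l x)) = ENNReal.ofReal l := by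
  refine measure_ball_dtmRadius_le.antisymm
    ((le_measure_closedBall_dtmRadius (P := P) (x := x) hl).trans ?_)
  rw [← ball_union_sphere]
  exact (measure_union_le _ _).trans (by rw [hsph, add_zero])

lemma dtmRadius_le_add_dist (hl : l < 1) (x y : Ed d) :
    dtmRadius P l x ≤ dtmRadius P l y + dist x y := by
  suffices dtmRadius P l x - dist x y ≤ dtmRadius P l y by linarith
  refine le_csInf (exists_lt_measure_closedBall hl y) fun r ⟨hr, hlr⟩ => ?_
  have hsub : closedBall y r ⊆ closedBall x (r + dist x y) := fun z hz => by
    rw [mem_closedBall] at hz ⊢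
    linarith [dist_triangle z y x, dist_comm x y]
  linarith [dtmRadius_le_of_lt_measure (by positivity) (hlr.trans_le (measure_mono hsub))]

end DtmRadius

section LayerCake

variable {d : ℕ} {P : Measure (Ed d)} [IsProbabilityMeasure P] {h : ℝ}

lemma aemeasurable_dtmRadius (hh1 : h < 1) (x : Ed d) :
    AEMeasurable (fun l => dtmRadius P l x) (volume.restrict (Ioc 0 h)) :=
  aemeasurable_restrict_of_monotoneOn measurableSet_Ioc fun _ _ _ hb hab =>
    dtmRadius_mono (hb.2.trans_lt hh1) hab

lemma map_dtmRadius_eq (hsph : ∀ (x : Ed d) (r : ℝ), P (sphere x r) = 0) (hh1 : h < 1)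
    (x : Ed d) :
    (volume.restrict (Ioc 0 h)).map (fun l => dtmRadius P l x) =
      (P.restrict (ball x (dtmRadius P h x))).map (fun y => dist y x) := by
  refine Measure.ext_of_Iic _ _ fun r => ?_
  rw [Measure.map_apply_of_aemeasurable (aemeasurable_dtmRadius hh1 x) measurableSet_Iic,
    Measure.map_apply (by fun_prop : Continuous fun y : Ed d => dist y x).measurable
      measurableSet_Iic,
    Measure.restrict_apply' measurableSet_Ioc, Measure.restrict_apply' measurableSet_ball]
  set a := (P (closedBall x r)).toReal
  have ha : P (closedBall x r) = ENNReal.ofReal a :=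
    (ENNReal.ofReal_toReal (measure_ne_top _ _)).symm
  have hlower : Ioo 0 (min h a) ⊆ (fun l => dtmRadius P l x) ⁻¹' Iic r ∩ Ioc 0 h :=
    fun l ⟨hl0, hl⟩ => ⟨not_lt.1 fun hrl => (lt_min_iff.1 hl).2.not_ge <|
        (ENNReal.ofReal_le_ofReal_iff hl0.le).1 (ha ▸ measure_closedBall_le_of_lt_dtmRadius hrl),
      hl0, hl.le.trans (min_le_left _ _)⟩
  have hupper : (fun l => dtmRadius P l x) ⁻¹' Iic r ∩ Ioc 0 h ⊆ Ioc 0 (min h a) :=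
    fun l ⟨hlr, hl0, hlh⟩ => ⟨hl0, le_min hlh <| not_lt.1 fun hal => (mem_Iic.1 hlr).not_gt <|
      lt_dtmRadius_of_measure_lt (hlh.trans_lt hh1)
        (ha ▸ ENNReal.ofReal_lt_ofReal_iff hl0 |>.2 hal)⟩
  have hLHS : volume ((fun l => dtmRadius P l x) ⁻¹' Iic r ∩ Ioc 0 h) =
      min (ENNReal.ofReal h) (P (closedBall x r)) := by
    refine le_antisymm ((measure_mono hupper).trans_eq ?_) ((measure_mono hlower).trans_eq' ?_) <;>
      simp [ha, ENNReal.ofReal_min]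
  have hPB := measure_ball_dtmRadius (x := x) hsph hh1
  rw [hLHS]
  change _ = P (closedBall x r ∩ ball x (dtmRadius P h x))
  rcases lt_or_ge r (dtmRadius P h x) with hr | hr
  · have hsub : closedBall x r ⊆ ball x (dtmRadius P h x) := closedBall_subset_ball hr
    rw [inter_eq_left.2 hsub, min_eq_right (hPB ▸ measure_mono hsub)]
  · have hsub : ball x (dtmRadius P h x) ⊆ closedBall x r := ball_subset_closedBall.trans
      (closedBall_subset_closedBall hr)
    rw [inter_eq_right.2 hsub, hPB, min_eq_left (hPB ▸ measure_mono hsub)]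

lemma dtm_sq_eq (hsph : ∀ (x : Ed d) (r : ℝ), P (sphere x r) = 0) (hh0 : 0 < h) (hh1 : h < 1)
    (x : Ed d) :
    dtm P h x ^ 2 = h⁻¹ * ∫ y in ball x (dtmRadius P h x), ‖y - x‖ ^ 2 ∂P := by
  have hcake : ∫ l in Ioc 0 h, dtmRadius P l x ^ 2 =
      ∫ y in ball x (dtmRadius P h x), dist y x ^ 2 ∂P := by
    rw [← integral_map (aemeasurable_dtmRadius hh1 x) (continuous_pow 2).aestronglyMeasurable,
      map_dtmRadius_eq hsph hh1 x,
      integral_map (by fun_prop : Continuous fun y : Ed d => dist y x).aemeasurable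
        (continuous_pow 2).aestronglyMeasurable]
  rw [dtm, Real.sq_sqrt (mul_nonneg (by positivity)
      (intervalIntegral.integral_nonneg hh0.le fun _ _ => sq_nonneg _)),
    intervalIntegral.integral_of_le hh0.le, hcake, one_div]
  simp_rw [dist_eq_norm]

end LayerCake

-- `risk P k μ` is `∫ u, ⨅ i, power (μ i) u ∂P` by definition.
noncomputable def power {d : ℕ} (μ : Measure (Ed d)) (x : Ed d) : ℝ :=
  ‖x - mMean μ‖ ^ 2 + mVar μ

section Power

variable {d : ℕ}

lemma power_nonneg (μ : Measure (Ed d)) (x : Ed d) : 0 ≤ power μ x :=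
  add_nonneg (sq_nonneg _) (integral_nonneg fun _ => sq_nonneg _)

lemma continuous_power (μ : Measure (Ed d)) : Continuous (power μ) := by
  unfold power
  fun_prop

lemma integral_norm_sub_sq (μ : Measure (Ed d)) [IsProbabilityMeasure μ] (hμ : MemLp id 2 μ)
    (x : Ed d) : ∫ y, ‖y - x‖ ^ 2 ∂μ = power μ x := by
  set m := mMean μ
  have hid : Integrable (fun y : Ed d => y) μ := hμ.integrable one_le_two
  have hint : Integrable (fun y => y - m) μ := hid.sub (integrable_const m)
  have hinner : Integrable (fun y => 2 * inner ℝ (m - x) (y - m)) μ :=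
    (hint.const_inner _).const_mul 2
  have hsq : Integrable (fun y => ‖y - m‖ ^ 2) μ :=
    (memLp_two_iff_integrable_sq_norm hint.aestronglyMeasurable).1 (hμ.sub (memLp_const m))
  have hmean : ∫ y, (y - m) ∂μ = 0 := by
    rw [integral_sub hid (integrable_const m)]
    simp [m, mMean]
  have hexp : ∀ y, ‖y - x‖ ^ 2 = ‖y - m‖ ^ 2 + 2 * inner ℝ (m - x) (y - m) + ‖x - m‖ ^ 2 := by
    intro y
    rw [← norm_sub_rev m x, show y - x = (y - m) + (m - x) by abel, norm_add_sq_real,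
      real_inner_comm]
  simp_rw [hexp]
  have hsum : Integrable (fun y => ‖y - m‖ ^ 2 + 2 * inner ℝ (m - x) (y - m)) μ :=
    hsq.add hinner
  rw [integral_add hsum (integrable_const _),
    integral_add hsq hinner, integral_const_mul, integral_inner hint, hmean]
  simp [power, mVar, m, add_comm]

lemma isProbabilityMeasure_inv_smul {Q : Measure (Ed d)} {h : ℝ} (hh0 : 0 < h)
    (hQ : Q univ = ENNReal.ofReal h) : IsProbabilityMeasure ((ENNReal.ofReal h)⁻¹ • Q) :=
  ⟨by rw [Measure.smul_apply, hQ, smul_eq_mul,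
    ENNReal.inv_mul_cancel (ENNReal.ofReal_pos.2 hh0).ne' ENNReal.ofReal_ne_top]⟩

lemma power_inv_smul {Q : Measure (Ed d)} {h : ℝ} (hh0 : 0 < h) (hQ : Q univ = ENNReal.ofReal h)
    (hQ2 : MemLp id 2 Q) (x : Ed d) :
    power ((ENNReal.ofReal h)⁻¹ • Q) x = h⁻¹ * ∫ y, ‖y - x‖ ^ 2 ∂Q := by
  have := isProbabilityMeasure_inv_smul hh0 hQ
  rw [← integral_norm_sub_sq _ (hQ2.smul_measure (by simpa using hh0)), integral_smul_measure,
    ENNReal.toReal_inv, ENNReal.toReal_ofReal hh0.le, smul_eq_mul]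

end Power

lemma setLIntegral_le_lintegral_of_le {α : Type*} [MeasurableSpace α] {P Q : Measure α}
    [IsFiniteMeasure P] (hQP : Q ≤ P) {B : Set α} (hB : MeasurableSet B) (hPB : P B = Q univ)
    {g : α → ℝ≥0∞} (hg : Measurable g) {c : ℝ≥0∞} (hgB : ∀ y ∈ B, g y ≤ c)
    (hgBc : ∀ y ∉ B, c ≤ g y) :
    ∫⁻ y in B, g y ∂P ≤ ∫⁻ y, g y ∂Q := by
  have : IsFiniteMeasure Q := isFiniteMeasure_of_le P hQP
  have hrest : (P - Q) B = Q Bᶜ := by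
    rw [Measure.sub_apply hB hQP, hPB, ← measure_add_measure_compl hB,
      ENNReal.add_sub_cancel_left (measure_ne_top Q B)]
  calc ∫⁻ y in B, g y ∂P = ∫⁻ y in B, g y ∂(P - Q) + ∫⁻ y in B, g y ∂Q := by
        conv_lhs => rw [← Measure.sub_add_cancel_of_le hQP]
        rw [Measure.restrict_add, lintegral_add_measure]
    _ ≤ ∫⁻ _ in B, c ∂(P - Q) + ∫⁻ y in B, g y ∂Q :=
        add_le_add (setLIntegral_mono measurable_const hgB) le_rfl
    _ = ∫⁻ _ in Bᶜ, c ∂Q + ∫⁻ y in B, g y ∂Q := by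
        rw [setLIntegral_const, setLIntegral_const, hrest]
    _ ≤ ∫⁻ y in Bᶜ, g y ∂Q + ∫⁻ y in B, g y ∂Q :=
        add_le_add (setLIntegral_mono (s := Bᶜ) hg hgBc) le_rfl
    _ = ∫⁻ y, g y ∂Q := by rw [add_comm, lintegral_add_compl _ hB]

section LocalMeasures

variable {d : ℕ} {P : Measure (Ed d)} {h : ℝ}

lemma exists_eq_inv_smul_of_mem_PlocExt {t : ExtPt d} {μ : Measure (Ed d)}
    (hμ : μ ∈ PlocExt P h t) :
    ∃ Q ≤ P, Q univ = ENNReal.ofReal h ∧ μ = (ENNReal.ofReal h)⁻¹ • Q := by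
  rcases t with x | v <;> obtain ⟨Q, rfl, hQP, hQ, -⟩ := hμ <;> exact ⟨Q, hQP, hQ, rfl⟩

variable [IsProbabilityMeasure P]

lemma dtm_sq_le_power_inv_smul (hP2 : MemLp id 2 P)
    (hsph : ∀ (x : Ed d) (r : ℝ), P (sphere x r) = 0) (hh0 : 0 < h) (hh1 : h < 1)
    {Q : Measure (Ed d)} (hQP : Q ≤ P) (hQ : Q univ = ENNReal.ofReal h) (x : Ed d) :
    dtm P h x ^ 2 ≤ power ((ENNReal.ofReal h)⁻¹ • Q) x := by
  have : IsFiniteMeasure Q := isFiniteMeasure_of_le P hQP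
  have hQ2 : MemLp id 2 Q := hP2.mono_measure hQP
  have hsq : Integrable (fun y => ‖y - x‖ ^ 2) Q :=
    (memLp_two_iff_integrable_sq_norm (by fun_prop)).1 (hQ2.sub (memLp_const x))
  rw [dtm_sq_eq hsph hh0 hh1, power_inv_smul hh0 hQ hQ2]
  refine mul_le_mul_of_nonneg_left ?_ (by positivity)
  set δ := dtmRadius P h x
  have hnonneg {ν : Measure (Ed d)} : 0 ≤ᵐ[ν] fun y => ‖y - x‖ ^ 2 :=
    ae_of_all _ fun _ => sq_nonneg _
  rw [integral_eq_lintegral_of_nonneg_ae hnonneg (by fun_prop),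
    integral_eq_lintegral_of_nonneg_ae hnonneg (by fun_prop)]
  refine ENNReal.toReal_mono hsq.lintegral_lt_top.ne <|
    setLIntegral_le_lintegral_of_le hQP measurableSet_ball
      ((measure_ball_dtmRadius hsph hh1).trans hQ.symm) (by fun_prop) (c := ENNReal.ofReal (δ ^ 2))
      (fun y hy => ?_) (fun y hy => ?_)
  · gcongr
    exact (dist_eq_norm y x).symm.trans_le (mem_ball.1 hy).le
  · gcongr
    · exact dtmRadius_nonneg P h x
    · exact (not_lt.1 hy).trans_eq (dist_eq_norm y x)

lemma measure_restrict_ball_dtmRadius (hsph : ∀ (x : Ed d) (r : ℝ), P (sphere x r) = 0)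
    (hh1 : h < 1) (x : Ed d) :
    P.restrict (ball x (dtmRadius P h x)) univ = ENNReal.ofReal h := by
  rw [Measure.restrict_apply_univ, measure_ball_dtmRadius hsph hh1]

lemma dtm_sq_eq_power_locMeasure (hP2 : MemLp id 2 P)
    (hsph : ∀ (x : Ed d) (r : ℝ), P (sphere x r) = 0) (hh0 : 0 < h) (hh1 : h < 1) (x : Ed d) :
    dtm P h x ^ 2 = power (locMeasure P h x) x := by
  rw [locMeasure, power_inv_smul hh0 (measure_restrict_ball_dtmRadius hsph hh1 x) (hP2.restrict _),
    dtm_sq_eq hsph hh0 hh1]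

lemma dtm_sq_le_power_locMeasure (hP2 : MemLp id 2 P)
    (hsph : ∀ (x : Ed d) (r : ℝ), P (sphere x r) = 0) (hh0 : 0 < h) (hh1 : h < 1) (x y : Ed d) :
    dtm P h x ^ 2 ≤ power (locMeasure P h y) x :=
  dtm_sq_le_power_inv_smul hP2 hsph hh0 hh1 Measure.restrict_le_self
    (measure_restrict_ball_dtmRadius hsph hh1 y) x

lemma locMeasure_mem_PlocPt (hsph : ∀ (x : Ed d) (r : ℝ), P (sphere x r) = 0) (hh1 : h < 1)
    (x : Ed d) : locMeasure P h x ∈ PlocPt P h x :=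
  ⟨_, rfl, Measure.restrict_le_self, measure_restrict_ball_dtmRadius hsph hh1 x,
    fun _ hA => Measure.restrict_eq_self P hA, by
      rw [Measure.restrict_apply measurableSet_closedBall.compl,
        (disjoint_compl_left_iff_subset.2 ball_subset_closedBall).inter_eq, measure_empty]⟩

lemma dtm_sq_le_power_of_mem_PlocExt (hP2 : MemLp id 2 P)
    (hsph : ∀ (x : Ed d) (r : ℝ), P (sphere x r) = 0) (hh0 : 0 < h) (hh1 : h < 1)
    {t : ExtPt d} {μ : Measure (Ed d)} (hμ : μ ∈ PlocExt P h t) (x : Ed d) :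
    dtm P h x ^ 2 ≤ power μ x := by
  obtain ⟨Q, hQP, hQ, rfl⟩ := exists_eq_inv_smul_of_mem_PlocExt hμ
  exact dtm_sq_le_power_inv_smul hP2 hsph hh0 hh1 hQP hQ x

lemma ae_norm_le_of_measure_compl_closedBall {Q : Measure (Ed d)} {K : ℝ}
    (hsupp : Q (closedBall (0 : Ed d) K)ᶜ = 0) : ∀ᵐ y ∂Q, ‖y‖ ≤ K := by
  filter_upwards [mem_ae_iff.2 hsupp] with y hy using mem_closedBall_zero_iff.1 hy

lemma memLp_id_of_measure_compl_closedBall {Q : Measure (Ed d)} [IsFiniteMeasure Q] {K : ℝ}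
    (hsupp : Q (closedBall (0 : Ed d) K)ᶜ = 0) (p : ℝ≥0∞) : MemLp id p Q :=
  .of_bound aestronglyMeasurable_id K (ae_norm_le_of_measure_compl_closedBall hsupp)

lemma norm_mMean_locMeasure_le {K : ℝ} (hsupp : P (closedBall (0 : Ed d) K)ᶜ = 0)
    (hsph : ∀ (x : Ed d) (r : ℝ), P (sphere x r) = 0) (hh0 : 0 < h) (hh1 : h < 1) (x : Ed d) :
    ‖mMean (locMeasure P h x)‖ ≤ K := by
  have : IsProbabilityMeasure (locMeasure P h x) :=
    isProbabilityMeasure_inv_smul hh0 (measure_restrict_ball_dtmRadius hsph hh1 x)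
  have hac : locMeasure P h x ≪ P :=
    Measure.smul_absolutelyContinuous.trans
      (Measure.absolutelyContinuous_of_le Measure.restrict_le_self)
  simpa [mMean] using
    norm_integral_le_of_norm_le_const (hac.ae_le (ae_norm_le_of_measure_compl_closedBall hsupp))

end LocalMeasures

section Integrability

variable {d : ℕ} {P : Measure (Ed d)} [IsProbabilityMeasure P] {h : ℝ}

lemma continuous_dtm (hh0 : 0 < h) (hh1 : h < 1) : Continuous (dtm P h) := by
  have hδ : ∀ l ∈ uIoc 0 h, l < 1 := fun l hl => (uIoc_of_le hh0.le ▸ hl).2.trans_lt hh1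
  have hint : Continuous fun x => ∫ l in (0 : ℝ)..h, dtmRadius P l x ^ 2 := by
    refine continuous_iff_continuousAt.2 fun x₀ =>
      intervalIntegral.continuousAt_of_dominated_interval
        (bound := fun _ => (dtmRadius P h x₀ + 1) ^ 2)
        (Eventually.of_forall fun x => ?_) ?_ intervalIntegrable_const
        (ae_of_all _ fun l hl => ((LipschitzWith.of_le_add
          (dtmRadius_le_add_dist (hδ l hl))).continuous.pow 2).continuousAt)
    · rw [uIoc_of_le hh0.le]
      exact ((aemeasurable_dtmRadius hh1 x).pow_const 2).aestronglyMeasurable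
    · filter_upwards [ball_mem_nhds x₀ one_pos] with x hx
      refine ae_of_all _ fun l hl => ?_
      have hl' : l ≤ h := (uIoc_of_le hh0.le ▸ hl).2
      rw [Real.norm_eq_abs, abs_of_nonneg (sq_nonneg _)]
      gcongr
      · exact dtmRadius_nonneg P l x
      · linarith [dtmRadius_le_add_dist (P := P) (hδ l hl) x x₀,
          dtmRadius_mono (P := P) (x := x₀) hh1 hl', mem_ball.1 hx]
  unfold dtm
  fun_prop

lemma Continuous.integrable_of_measure_compl_closedBall {X : Type*} [MetricSpace X]
    [ProperSpace X] [MeasurableSpace X] [OpensMeasurableSpace X] {μ : Measure X}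
    [IsFiniteMeasure μ] {g : X → ℝ} (hg : Continuous g) {x₀ : X} {K : ℝ}
    (hsupp : μ (closedBall x₀ K)ᶜ = 0) : Integrable g μ := by
  rw [← Measure.restrict_eq_self_of_ae_mem (mem_ae_iff.2 hsupp)]
  exact hg.continuousOn.integrableOn_compact (isCompact_closedBall x₀ K)

lemma integrable_dtm_sq {K : ℝ} (hsupp : P (closedBall (0 : Ed d) K)ᶜ = 0) (hh0 : 0 < h)
    (hh1 : h < 1) : Integrable (fun u => dtm P h u ^ 2) P :=
  ((continuous_dtm hh0 hh1).pow 2).integrable_of_measure_compl_closedBall hsupp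

lemma integrable_iInf_power {ι : Type*} [Countable ι] [Nonempty ι] {K : ℝ}
    (hsupp : P (closedBall (0 : Ed d) K)ᶜ = 0) (μ : ι → Measure (Ed d)) :
    Integrable (fun u => ⨅ i, power (μ i) u) P := by
  obtain ⟨i₀⟩ := ‹Nonempty ι›
  refine ((continuous_power (μ i₀)).integrable_of_measure_compl_closedBall hsupp).mono'
    (Measurable.iInf fun i => (continuous_power (μ i)).measurable).aestronglyMeasurable
    (ae_of_all _ fun u => ?_)
  rw [Real.norm_eq_abs, abs_of_nonneg (le_ciInf fun i => power_nonneg _ _)]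
  exact ciInf_le ⟨0, by rintro _ ⟨i, rfl⟩; exact power_nonneg _ _⟩ i₀

end Integrability

lemma integral_le_of_forall_mem_of_measure_eq_one {α : Type*} [MeasurableSpace α]
    {P : Measure α} [IsProbabilityMeasure P] {g : α → ℝ} (hg : Integrable g P) {M : Set α}
    (hM : P M = 1) {C : ℝ} (hgM : ∀ u ∈ M, g u ≤ C) : ∫ u, g u ∂P ≤ C := by
  have hae : ∀ᵐ u ∂P, g u ≤ C := by
    rw [ae_iff_measure_eq (nullMeasurableSet_le hg.aemeasurable aemeasurable_const), measure_univ]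
    exact le_antisymm prob_le_one (hM ▸ measure_mono hgM)
  simpa using integral_mono_ae hg (integrable_const C) hae

lemma norm_sub_sq_sub_norm_sub_sq_sub {E : Type*} [NormedAddCommGroup E] [InnerProductSpace ℝ E]
    (u c a b : E) :
    (‖u - a‖ ^ 2 - ‖u - b‖ ^ 2) - (‖c - a‖ ^ 2 - ‖c - b‖ ^ 2) =
      2 * inner ℝ (u - c) (b - a) := by
  simp only [norm_sub_sq_real, inner_sub_left, inner_sub_right]
  ring

section Approximation

variable {d : ℕ} {P : Measure (Ed d)} [IsProbabilityMeasure P] {h : ℝ}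

lemma power_locMeasure_le_dtm_sq_add (hP2 : MemLp id 2 P)
    (hsph : ∀ (x : Ed d) (r : ℝ), P (sphere x r) = 0) (hh0 : 0 < h) (hh1 : h < 1) (u c : Ed d) :
    power (locMeasure P h c) u ≤
      dtm P h u ^ 2 +
        2 * ‖u - c‖ * ‖mMean (locMeasure P h u) - mMean (locMeasure P h c)‖ := by
  have hu := dtm_sq_eq_power_locMeasure hP2 hsph hh0 hh1 u
  have hc := (dtm_sq_eq_power_locMeasure hP2 hsph hh0 hh1 c).symm.trans_le
    (dtm_sq_le_power_locMeasure hP2 hsph hh0 hh1 c u)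
  have hgrad := norm_sub_sq_sub_norm_sub_sq_sub u c (mMean (locMeasure P h c)) (mMean (locMeasure P h u))
  have hcs := real_inner_le_norm (u - c) (mMean (locMeasure P h u) - mMean (locMeasure P h c))
  unfold power at *
  linarith

lemma integral_iInf_power_locMeasure_sub_dtm_sq_le {ι : Type*} [Countable ι] [Nonempty ι]
    {K : ℝ} (hsupp : P (closedBall (0 : Ed d) K)ᶜ = 0)
    (hsph : ∀ (x : Ed d) (r : ℝ), P (sphere x r) = 0) (hh0 : 0 < h) (hh1 : h < 1)
    {M : Set (Ed d)} (hPM : P M = 1) {ε ζ : ℝ} {c : ι → Ed d}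
    (hcov : M ⊆ ⋃ i, closedBall (c i) ε)
    (hζ : ∀ u ∈ M, ∀ i, ‖u - c i‖ ≤ ε →
      ‖mMean (locMeasure P h u) - mMean (locMeasure P h (c i))‖ ≤ ζ) :
    ∫ u, ((⨅ i, power (locMeasure P h (c i)) u) - dtm P h u ^ 2) ∂P ≤ 2 * ε * ζ := by
  have hP2 := memLp_id_of_measure_compl_closedBall hsupp 2
  refine integral_le_of_forall_mem_of_measure_eq_one
    ((integrable_iInf_power hsupp _).sub (integrable_dtm_sq hsupp hh0 hh1)) hPM fun u hu => ?_
  obtain ⟨i, hi⟩ := mem_iUnion.1 (hcov hu)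
  have hui : ‖u - c i‖ ≤ ε := (dist_eq_norm u (c i)) ▸ mem_closedBall.1 hi
  calc (⨅ j, power (locMeasure P h (c j)) u) - dtm P h u ^ 2
      ≤ power (locMeasure P h (c i)) u - dtm P h u ^ 2 :=
        sub_le_sub_right (ciInf_le ⟨0, by rintro _ ⟨j, rfl⟩; exact power_nonneg _ _⟩ i) _
    _ ≤ 2 * ‖u - c i‖ * ‖mMean (locMeasure P h u) - mMean (locMeasure P h (c i))‖ := by
        linarith [power_locMeasure_le_dtm_sq_add hP2 hsph hh0 hh1 u (c i)]
    _ ≤ 2 * ε * ζ := mul_le_mul (by linarith) (hζ u hu i hui) (norm_nonneg _)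
        (by linarith [norm_nonneg (u - c i)])

end Approximation

theorem stmt_10_general {d : ℕ} (h K : ℝ) (hh : h ∈ Set.Ioo (0:ℝ) 1)
    (k : ℕ) (hk : 1 ≤ k)
    (P : Measure (Ed d)) [IsProbabilityMeasure P]
    (hsupp : P ((closedBall (0 : Ed d) K)ᶜ) = 0)
    (hsph : ∀ (x : Ed d) (r : ℝ), P (sphere x r) = 0)
    (M : Set (Ed d)) (hPM : P M = 1)
    (f : Ed d → ℝ) (hf : IsKPDTM P h k f) :
    0 ≤ ∫ u, (f u ^ 2 - dtm P h u ^ 2) ∂P ∧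
    ∀ ε : ℝ, 0 < ε →
      (∃ c : Fin k → Ed d, (∀ i, c i ∈ M) ∧ M ⊆ ⋃ i, closedBall (c i) ε) →
      ∫ u, (f u ^ 2 - dtm P h u ^ 2) ∂P ≤
        2 * ε * sSup {z : ℝ | ∃ x ∈ M, ∃ y ∈ M, ‖x - y‖ ≤ ε ∧
          z = ‖mMean (locMeasure P h x) - mMean (locMeasure P h y)‖} := by
  obtain ⟨hh0, hh1⟩ := hh
  obtain ⟨t, μ, hcenter, hopt, hfμ⟩ := hf
  have : Nonempty (Fin k) := ⟨⟨0, hk⟩⟩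
  have hf2 : (fun u => f u ^ 2) = fun u => ⨅ i, power (μ i) u := funext fun u => by
    rw [hfμ]
    exact Real.sq_sqrt (le_ciInf fun i => power_nonneg (μ i) u)
  have hdtm u : dtm P h u ^ 2 ≤ f u ^ 2 := congrFun hf2 u ▸ le_ciInf fun i =>
    dtm_sq_le_power_of_mem_PlocExt (memLp_id_of_measure_compl_closedBall hsupp 2) hsph hh0 hh1
      (hcenter i) u
  refine ⟨integral_nonneg fun u => sub_nonneg.2 (hdtm u), fun ε _ ⟨c, hcM, hcov⟩ => ?_⟩
  have hbdd : BddAbove {z : ℝ | ∃ x ∈ M, ∃ y ∈ M, ‖x - y‖ ≤ ε ∧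
      z = ‖mMean (locMeasure P h x) - mMean (locMeasure P h y)‖} := ⟨K + K, by
    rintro _ ⟨x, -, y, -, -, rfl⟩
    exact (norm_sub_le _ _).trans (add_le_add (norm_mMean_locMeasure_le hsupp hsph hh0 hh1 x)
      (norm_mMean_locMeasure_le hsupp hsph hh0 hh1 y))⟩
  have hintf : Integrable (fun u => f u ^ 2) P := hf2 ▸ integrable_iInf_power hsupp μ
  calc ∫ u, (f u ^ 2 - dtm P h u ^ 2) ∂P
      = risk P k μ - ∫ u, dtm P h u ^ 2 ∂P := by
        rw [integral_sub hintf (integrable_dtm_sq hsupp hh0 hh1), hf2]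
        rfl
    _ ≤ risk P k (fun i => locMeasure P h (c i)) - ∫ u, dtm P h u ^ 2 ∂P :=
        sub_le_sub_right
          (hopt (fun i => .inl (c i)) _ fun i => locMeasure_mem_PlocPt hsph hh1 (c i)) _
    _ = ∫ u, ((⨅ i, power (locMeasure P h (c i)) u) - dtm P h u ^ 2) ∂P :=
        (integral_sub (integrable_iInf_power hsupp _) (integrable_dtm_sq hsupp hh0 hh1)).symm
    _ ≤ _ := integral_iInf_power_locMeasure_sub_dtm_sq_le hsupp hsph hh0 hh1 hPM hcov
        fun u hu i hui => le_csSup hbdd ⟨u, hu, c i, hcM i, hui, rfl⟩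

/-- the `k`-PDTM approximates the DTM in `L¹(P)`, with an error controlled by the
covering radius and the continuity modulus of the local means. -/
theorem stmt_10 {d : ℕ} (h K : ℝ) (hh : h ∈ Set.Ioo (0:ℝ) 1) (hK : 0 < K)
    (k : ℕ) (hk : 1 ≤ k)
    (P : Measure (Ed d)) [IsProbabilityMeasure P]
    (hsupp : P ((closedBall (0 : Ed d) K)ᶜ) = 0)
    (hsph : ∀ (x : Ed d) (r : ℝ), P (sphere x r) = 0)
    (hhyp : ∀ v : Ed d, ‖v‖ = 1 → P {y : Ed d | (inner ℝ y v : ℝ) = cInf P h v} = 0)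
    (M : Set (Ed d)) (hM : M ⊆ ball (0 : Ed d) K) (hPM : P M = 1)
    (f : Ed d → ℝ) (hf : IsKPDTM P h k f) :
    0 ≤ ∫ u, (f u ^ 2 - dtm P h u ^ 2) ∂P ∧
    ∀ ε : ℝ, 0 < ε →
      (∃ c : Fin k → Ed d, (∀ i, c i ∈ M) ∧ M ⊆ ⋃ i, closedBall (c i) ε) →
      ∫ u, (f u ^ 2 - dtm P h u ^ 2) ∂P ≤
        2 * ε * sSup {z : ℝ | ∃ x ∈ M, ∃ y ∈ M, ‖x - y‖ ≤ ε ∧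
          z = ‖mMean (locMeasure P h x) - mMean (locMeasure P h y)‖} :=
  stmt_10_general h K hh k hk P hsupp hsph M hPM f hf
end

section
/- Let h ∈ (0,1), k ≥ 1, ε > 0, d' > 0, K > 0. Let M ⊂ B(0,K) be a compact set and P a Borel probability measure with P(M) = 1 such that P(B̄(p,r)) ≥ min(C(P)·r^{d'}, 1) for every p ∈ M and every r > 0, for some constant C(P) > 0. Let Q be a Borel probability measure on ℝ^d with finite second moment, let d_{Q,h,k,ε} be an ε-approximate k-PDTM of Q, set Δ_P² := ∫d_{Q,h,k,ε}²(u) dP(u), and let d_M(x) := inf_{p∈M}‖x − p‖. Then sup_{x ∈ ℝ^d}|d_{Q,h,k,ε}(x) − d_M(x)| ≤ 2·C(P)^{−1/(d'+2)}·Δ_P^{2/(d'+2)} + 2·Δ_P + W₂(P,Q)·h^{−1/2}. -/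
open MeasureTheory ENNReal Set Metric

/-! An approximate `k`-PDTM is a power distance `f x = √(minᵢ ‖x - mᵢ‖² + vᵢ)` with `vᵢ ≥ 0`, hence
1-Lipschitz.

If `f p = 2r` at a point `p ∈ M`, then `f ≥ r` on `B̄(p, r)`, so `r² P(B̄(p, r)) ≤ ∫ f² dP = Δ²`,
and the growth condition on `P` turns this into `r ≤ C^{-1/(d'+2)} Δ^{2/(d'+2)} + Δ`; being
1-Lipschitz, `f - d_M` is bounded on all of `ℝ^d` by `sup_M f`.

Conversely, let the minimum at `x` be attained by a center whose localized measure `μ` satisfies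
`μ ≤ Q / h`. Then `‖x - m(μ)‖² + v(μ) = ∫ ‖x - u‖² dμ`, so by Jensen
`d_M(x) ≤ ∫ (‖x - u‖ + d_M(u)) dμ ≤ f(x) + h^{-1/2} (∫ d_M² dQ)^{1/2}`, and `∫ d_M² dQ` is at most
the transport cost `∫ ‖y - z‖² dπ` of any coupling `π` of `P` and `Q`, since `P` lives on `M`. -/

lemma sqrt_sq_add_le_sqrt_sq_add_add {a b c v : ℝ} (ha : 0 ≤ a) (hc : 0 ≤ c)
    (hv : 0 ≤ v) (hab : a ≤ b + c) : √(a ^ 2 + v) ≤ √(b ^ 2 + v) + c := by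
  have hb_le : b ≤ √(b ^ 2 + v) := Real.le_sqrt_of_sq_le (by linarith)
  have hsq : √(b ^ 2 + v) ^ 2 = b ^ 2 + v := Real.sq_sqrt (by positivity)
  rw [Real.sqrt_le_iff]
  refine ⟨by positivity, ?_⟩
  nlinarith [mul_le_mul_of_nonneg_left hb_le hc, pow_le_pow_left₀ ha hab 2]

section PowerDist

variable {ι E : Type*} [SeminormedAddCommGroup E]

noncomputable def powerDist (m : ι → E) (v : ι → ℝ) (x : E) : ℝ :=
  √(⨅ i, (‖x - m i‖ ^ 2 + v i))

variable {m : ι → E} {v : ι → ℝ}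

lemma powerDist_le (hv : ∀ i, 0 ≤ v i) (x : E) (i : ι) :
    powerDist m v x ≤ √(‖x - m i‖ ^ 2 + v i) :=
  Real.sqrt_le_sqrt <| ciInf_le ⟨0, by rintro _ ⟨j, rfl⟩; have := hv j; positivity⟩ i

lemma exists_powerDist_eq [Finite ι] [Nonempty ι] (x : E) :
    ∃ i, powerDist m v x = √(‖x - m i‖ ^ 2 + v i) := by
  obtain ⟨i, hi⟩ := exists_eq_ciInf_of_finite (f := fun i => ‖x - m i‖ ^ 2 + v i)
  exact ⟨i, by rw [powerDist, ← hi]⟩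

lemma lipschitzWith_powerDist [Finite ι] [Nonempty ι] (hv : ∀ i, 0 ≤ v i) :
    LipschitzWith 1 (powerDist m v) := by
  refine LipschitzWith.of_le_add fun y z => ?_
  obtain ⟨i, hi⟩ := exists_powerDist_eq (m := m) (v := v) z
  rw [hi, dist_eq_norm]
  refine (powerDist_le hv y i).trans <| sqrt_sq_add_le_sqrt_sq_add_add (norm_nonneg _)
    (norm_nonneg _) (hv i) ?_
  linarith [norm_sub_le_norm_sub_add_norm_sub y z (m i)]

end PowerDist

lemma le_rpow_add_of_min_mul_sq_le {c d' r D : ℝ} (hc : 0 < c) (hd' : 0 < d' + 2) (hr : 0 < r)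
    (hD : 0 ≤ D) (h : min (c * r ^ d') 1 * r ^ 2 ≤ D ^ 2) :
    r ≤ c ^ (-(1 : ℝ) / (d' + 2)) * D ^ ((2 : ℝ) / (d' + 2)) + D := by
  have hfirst : 0 ≤ c ^ (-(1 : ℝ) / (d' + 2)) * D ^ ((2 : ℝ) / (d' + 2)) := by positivity
  rcases le_or_gt (c * r ^ d') 1 with hsmall | hlarge
  · rw [min_eq_left hsmall] at h
    have hpow : r ^ (d' + 2) ≤ D ^ 2 / c := by
      rw [Real.rpow_add hr, Real.rpow_two, le_div_iff₀ hc]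
      linarith
    have hroot : (D ^ 2 / c) ^ (d' + 2)⁻¹ =
        c ^ (-(1 : ℝ) / (d' + 2)) * D ^ ((2 : ℝ) / (d' + 2)) := by
      rw [Real.div_rpow (sq_nonneg D) hc.le, ← Real.rpow_two, ← Real.rpow_mul hD,
        neg_div, Real.rpow_neg hc.le, one_div, div_eq_inv_mul, div_eq_mul_inv]
    calc r = (r ^ (d' + 2)) ^ (d' + 2)⁻¹ := by
          rw [← Real.rpow_mul hr.le, mul_inv_cancel₀ hd'.ne', Real.rpow_one]
      _ ≤ (D ^ 2 / c) ^ (d' + 2)⁻¹ := by gcongr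
      _ ≤ _ := by rw [hroot]; linarith
  · rw [min_eq_right hlarge.le, one_mul] at h
    linarith [(pow_le_pow_iff_left₀ hr.le hD two_ne_zero).1 h]

section Growth

variable {X : Type*} [PseudoMetricSpace X] {f : X → ℝ}

lemma LipschitzWith.le_add_dist (hf : LipschitzWith 1 f) (x y : X) : f x ≤ f y + dist x y := by
  simpa only [NNReal.coe_one, one_mul] using hf.le_add_mul x y

lemma LipschitzWith.le_add_infDist (hf : LipschitzWith 1 f) {M : Set X} (hM : M.Nonempty)
    {B : ℝ} (hB : ∀ p ∈ M, f p ≤ B) (x : X) : f x ≤ B + infDist x M := by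
  rw [← sub_le_iff_le_add']
  exact (le_infDist hM).2 fun p hp => by linarith [hf.le_add_dist x p, hB p hp]

lemma LipschitzWith.le_of_min_le_measure_closedBall [MeasurableSpace X] {P : Measure X}
    [IsFiniteMeasure P] (hf : LipschitzWith 1 f) (hf2 : Integrable (fun u => f u ^ 2) P)
    {c d' : ℝ} (hc : 0 < c) (hd' : 0 < d' + 2) {p : X}
    (hp : ∀ r : ℝ, 0 < r → min (ENNReal.ofReal (c * r ^ d')) 1 ≤ P (closedBall p r)) :
    f p ≤ 2 * c ^ (-(1 : ℝ) / (d' + 2)) * √(∫ u, f u ^ 2 ∂P) ^ ((2 : ℝ) / (d' + 2))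
      + 2 * √(∫ u, f u ^ 2 ∂P) := by
  set D := √(∫ u, f u ^ 2 ∂P)
  have hD : 0 ≤ D := Real.sqrt_nonneg _
  rcases le_or_gt (f p) 0 with hp0 | hp0
  · have : 0 ≤ c ^ (-(1 : ℝ) / (d' + 2)) * D ^ ((2 : ℝ) / (d' + 2)) := by positivity
    linarith
  set r := f p / 2 with hr_def
  have hr : 0 < r := by positivity
  have hball : closedBall p r ⊆ {u | r ^ 2 ≤ f u ^ 2} := fun u hu => by
    have hrf : r ≤ f u := by linarith [hf.le_add_dist p u, mem_closedBall'.1 hu]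
    exact pow_le_pow_left₀ hr.le hrf 2
  have hmass : min (c * r ^ d') 1 ≤ P.real (closedBall p r) := by
    have := ENNReal.toReal_mono (measure_ne_top P _) (hp r hr)
    rwa [ENNReal.toReal_min ENNReal.ofReal_ne_top ENNReal.one_ne_top,
      ENNReal.toReal_ofReal (by positivity), ENNReal.toReal_one] at this
  have hmarkov : r ^ 2 * P.real (closedBall p r) ≤ D ^ 2 := calc
    r ^ 2 * P.real (closedBall p r) ≤ r ^ 2 * P.real {u | r ^ 2 ≤ f u ^ 2} := by
      gcongr
      finiteness
    _ ≤ ∫ u, f u ^ 2 ∂P :=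
      mul_meas_ge_le_integral_of_nonneg (ae_of_all _ fun _ => sq_nonneg _) hf2 _
    _ = D ^ 2 := (Real.sq_sqrt (integral_nonneg fun _ => sq_nonneg _)).symm
  have := le_rpow_add_of_min_mul_sq_le hc hd' hr hD <|
    (mul_le_mul_of_nonneg_right hmass (sq_nonneg r)).trans (by linarith)
  rw [mul_assoc]
  linarith

end Growth

lemma integral_le_sqrt_integral_sq {Ω : Type*} [MeasurableSpace Ω] {μ : Measure Ω}
    [IsProbabilityMeasure μ] {g : Ω → ℝ} (hg : MemLp g 2 μ) :
    ∫ ω, g ω ∂μ ≤ √(∫ ω, g ω ^ 2 ∂μ) := by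
  refine Real.le_sqrt_of_sq_le ?_
  have := ProbabilityTheory.variance_nonneg g μ
  rw [ProbabilityTheory.variance_eq_sub hg] at this
  simpa only [Pi.pow_apply, sub_nonneg] using this

section SecondMoment

variable {E : Type*} [NormedAddCommGroup E] [MeasurableSpace E] [OpensMeasurableSpace E]
  {μ : Measure E}

lemma memLp_id_two_of_lintegral_norm_sq_lt_top [SecondCountableTopology E]
    (hμ : ∫⁻ u, ENNReal.ofReal (‖u‖ ^ 2) ∂μ < ⊤) : MemLp id 2 μ :=
  (memLp_two_iff_integrable_sq_norm aestronglyMeasurable_id).2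
    ⟨by fun_prop, (hasFiniteIntegral_iff_ofReal (ae_of_all _ fun _ => sq_nonneg _)).2 hμ⟩

lemma memLp_id_of_ae_mem_isCompact [IsFiniteMeasure μ] [SecondCountableTopology E]
    {M : Set E} (hM : IsCompact M) (hμM : ∀ᵐ u ∂μ, u ∈ M) (p : ℝ≥0∞) : MemLp id p μ := by
  obtain ⟨C, hC⟩ := hM.isBounded.exists_norm_le
  exact MemLp.of_bound aestronglyMeasurable_id C (hμM.mono hC)

lemma memLp_infDist [IsFiniteMeasure μ] {p : ℝ≥0∞} (hμ : MemLp id p μ) (M : Set E) :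
    MemLp (fun u => infDist u M) p μ := by
  rcases M.eq_empty_or_nonempty with rfl | ⟨q, hq⟩
  · simp only [infDist_empty]
    exact memLp_const 0
  · refine (hμ.sub (memLp_const q)).norm.of_le (continuous_infDist_pt M).aestronglyMeasurable
      (ae_of_all _ fun u => ?_)
    rw [Real.norm_of_nonneg infDist_nonneg, norm_norm, Pi.sub_apply, id, ← dist_eq_norm]
    exact infDist_le_dist_of_mem hq

lemma infDist_le_sqrt_integral_add_sqrt_integral [IsProbabilityMeasure μ] (hμ : MemLp id 2 μ)
    (M : Set E) (x : E) :
    infDist x M ≤ √(∫ u, ‖x - u‖ ^ 2 ∂μ) + √(∫ u, infDist u M ^ 2 ∂μ) := by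
  have hx : MemLp (fun u => ‖x - u‖) 2 μ := ((memLp_const x).sub hμ).norm
  have hM : MemLp (fun u => infDist u M) 2 μ := memLp_infDist hμ M
  calc infDist x M = ∫ _, infDist x M ∂μ := by simp
    _ ≤ ∫ u, (‖x - u‖ + infDist u M) ∂μ := by
        refine integral_mono (integrable_const _) ((hx.integrable one_le_two).add
          (hM.integrable one_le_two)) fun u => ?_
        linarith [infDist_le_infDist_add_dist (x := x) (y := u) (s := M), dist_eq_norm x u]
    _ = ∫ u, ‖x - u‖ ∂μ + ∫ u, infDist u M ∂μ :=
        integral_add (hx.integrable one_le_two) (hM.integrable one_le_two)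
    _ ≤ _ := add_le_add (integral_le_sqrt_integral_sq hx) (integral_le_sqrt_integral_sq hM)

end SecondMoment

section Localized

variable {d : ℕ}

lemma integral_norm_sub_sq_eq {μ : Measure (Ed d)} [IsProbabilityMeasure μ] (hμ : MemLp id 2 μ)
    (x : Ed d) : ∫ u, ‖x - u‖ ^ 2 ∂μ = ‖x - mMean μ‖ ^ 2 + mVar μ := by
  set m := mMean μ
  have hc : MemLp (fun u => u - m) 2 μ := hμ.sub (memLp_const m)
  have hc1 : Integrable (fun u => u - m) μ := hc.integrable one_le_two
  have hc2 : Integrable (fun u => ‖u - m‖ ^ 2) μ := (memLp_two_iff_integrable_sq_norm hc.1).1 hc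
  have hinner : Integrable (fun u => 2 * inner ℝ (x - m) (u - m)) μ :=
    (hc1.const_inner _).const_mul 2
  have hcentered : ∫ u, (u - m) ∂μ = 0 := by
    rw [integral_sub (f := fun u => u) (hμ.integrable one_le_two) (integrable_const m),
      integral_const, probReal_univ, one_smul]
    exact sub_eq_zero.2 rfl
  have hexpand : (fun u => ‖x - u‖ ^ 2) =
      fun u => ‖x - m‖ ^ 2 - 2 * inner ℝ (x - m) (u - m) + ‖u - m‖ ^ 2 := by
    ext u
    rw [← sub_sub_sub_cancel_right x u m, norm_sub_sq_real]
  rw [hexpand, integral_add (f := fun u => ‖x - m‖ ^ 2 - 2 * inner ℝ (x - m) (u - m))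
      ((integrable_const _).sub hinner) hc2, integral_sub (integrable_const _) hinner,
    integral_const, integral_const_mul, integral_inner hc1, hcentered, inner_zero_right]
  simp [mVar, m]

lemma exists_eq_smul_of_mem_plocExt {Q : Measure (Ed d)} {h : ℝ} {e : ExtPt d}
    {μ : Measure (Ed d)} (hμ : μ ∈ PlocExt Q h e) :
    ∃ Q' : Measure (Ed d), μ = (ENNReal.ofReal h)⁻¹ • Q' ∧ Q' ≤ Q ∧
      Q' Set.univ = ENNReal.ofReal h := by
  cases e with
  | inl x => obtain ⟨Q', hμQ', hQ'Q, hQ'univ, -, -⟩ := hμ; exact ⟨Q', hμQ', hQ'Q, hQ'univ⟩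
  | inr v => obtain ⟨Q', hμQ', hQ'Q, hQ'univ, -, -⟩ := hμ; exact ⟨Q', hμQ', hQ'Q, hQ'univ⟩

lemma le_smul_of_mem_plocExt {Q : Measure (Ed d)} {h : ℝ} {e : ExtPt d} {μ : Measure (Ed d)}
    (hμ : μ ∈ PlocExt Q h e) : μ ≤ (ENNReal.ofReal h)⁻¹ • Q := by
  obtain ⟨Q', rfl, hQ'Q, -⟩ := exists_eq_smul_of_mem_plocExt hμ
  intro s
  simp only [Measure.smul_apply, smul_eq_mul]
  gcongr

lemma isProbabilityMeasure_of_mem_plocExt {Q : Measure (Ed d)} {h : ℝ} (hh : 0 < h)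
    {e : ExtPt d} {μ : Measure (Ed d)} (hμ : μ ∈ PlocExt Q h e) : IsProbabilityMeasure μ := by
  obtain ⟨Q', rfl, -, hQ'univ⟩ := exists_eq_smul_of_mem_plocExt hμ
  constructor
  rw [Measure.smul_apply, hQ'univ, smul_eq_mul,
    ENNReal.inv_mul_cancel (ENNReal.ofReal_pos.2 hh).ne' ENNReal.ofReal_ne_top]

lemma infDist_le_of_mem_plocExt {Q : Measure (Ed d)} [IsFiniteMeasure Q] (hQ : MemLp id 2 Q)
    {h : ℝ} (hh : 0 < h) {e : ExtPt d} {μ : Measure (Ed d)} (hμ : μ ∈ PlocExt Q h e)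
    (M : Set (Ed d)) (x : Ed d) :
    infDist x M ≤
      √(‖x - mMean μ‖ ^ 2 + mVar μ) + h ^ (-(1 : ℝ) / 2) * √(∫ u, infDist u M ^ 2 ∂Q) := by
  have := isProbabilityMeasure_of_mem_plocExt hh hμ
  have hle := le_smul_of_mem_plocExt hμ
  have hfin : (ENNReal.ofReal h)⁻¹ ≠ ∞ := ENNReal.inv_ne_top.2 (ENNReal.ofReal_pos.2 hh).ne'
  have hμ2 : MemLp id 2 μ := (hQ.smul_measure hfin).mono_measure hle
  have htransfer : ∫ u, infDist u M ^ 2 ∂μ ≤ h⁻¹ * ∫ u, infDist u M ^ 2 ∂Q := by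
    refine (integral_mono_measure hle (ae_of_all _ fun _ => sq_nonneg _)
      ((memLp_infDist hQ M).integrable_sq.smul_measure hfin)).trans_eq ?_
    rw [integral_smul_measure, ENNReal.toReal_inv, ENNReal.toReal_ofReal hh.le, smul_eq_mul]
  calc infDist x M ≤ √(∫ u, ‖x - u‖ ^ 2 ∂μ) + √(∫ u, infDist u M ^ 2 ∂μ) :=
        infDist_le_sqrt_integral_add_sqrt_integral hμ2 M x
    _ ≤ √(‖x - mMean μ‖ ^ 2 + mVar μ) + √(h⁻¹ * ∫ u, infDist u M ^ 2 ∂Q) := by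
        rw [integral_norm_sub_sq_eq hμ2]
        gcongr
    _ = _ := by
        rw [Real.sqrt_mul (inv_nonneg.2 hh.le), Real.sqrt_inv, Real.sqrt_eq_rpow h,
          neg_div, Real.rpow_neg hh.le]

end Localized

section Wasserstein

variable {d : ℕ}

lemma Wdist_nonneg (p : ℝ) (P Q : Measure (Ed d)) : 0 ≤ Wdist p P Q :=
  Real.sInf_nonneg <| by
    rintro _ ⟨π, -, -, rfl⟩
    exact Real.rpow_nonneg (integral_nonneg fun _ => Real.rpow_nonneg (norm_nonneg _) _) _

lemma sqrt_integral_infDist_sq_le_Wdist {P Q : Measure (Ed d)} [IsProbabilityMeasure P]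
    [IsProbabilityMeasure Q] {M : Set (Ed d)} (hPM : ∀ᵐ u ∂P, u ∈ M) (hP : MemLp id 2 P)
    (hQ : MemLp id 2 Q) : √(∫ u, infDist u M ^ 2 ∂Q) ≤ Wdist 2 P Q := by
  refine le_csInf ⟨_, P.prod Q, by simp, by simp, rfl⟩ ?_
  rintro _ ⟨π, hπP, hπQ, rfl⟩
  have hfst : MemLp Prod.fst 2 π :=
    (memLp_map_measure_iff aestronglyMeasurable_id measurable_fst.aemeasurable).1 (hπP ▸ hP)
  have hsnd : MemLp Prod.snd 2 π :=
    (memLp_map_measure_iff aestronglyMeasurable_id measurable_snd.aemeasurable).1 (hπQ ▸ hQ)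
  have hcost : Integrable (fun y : Ed d × Ed d => ‖y.1 - y.2‖ ^ 2) π :=
    (memLp_two_iff_integrable_sq_norm (hfst.sub hsnd).1).1 (hfst.sub hsnd)
  have hM : ∀ᵐ y ∂π, y.1 ∈ M := ae_of_ae_map measurable_fst.aemeasurable (hπP ▸ hPM)
  simp_rw [Real.rpow_two, ← Real.sqrt_eq_rpow]
  gcongr
  rw [← hπQ, integral_map (f := fun u => infDist u M ^ 2) measurable_snd.aemeasurable
    ((continuous_infDist_pt M).pow 2).aestronglyMeasurable]
  refine integral_mono_of_nonneg (ae_of_all _ fun _ => sq_nonneg _) hcost ?_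
  filter_upwards [hM] with y hy
  rw [← dist_eq_norm, dist_comm]
  exact pow_le_pow_left₀ infDist_nonneg (infDist_le_dist_of_mem hy) 2

end Wasserstein

theorem stmt_14_general {d : ℕ} (h : ℝ) (hh : h ∈ Set.Ioo (0:ℝ) 1) (k : ℕ) (hk : 1 ≤ k)
    (ε d' : ℝ) (hd' : 0 < d')
    (M : Set (Ed d)) (hMcpt : IsCompact M)
    (P : Measure (Ed d)) [IsProbabilityMeasure P] (hPM : P M = 1)
    (c : ℝ) (hc : 0 < c)
    (hstd : ∀ p ∈ M, ∀ r : ℝ, 0 < r →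
      min (ENNReal.ofReal (c * r ^ d')) 1 ≤ P (closedBall p r))
    (Q : Measure (Ed d)) [IsProbabilityMeasure Q]
    (hQ2 : ∫⁻ u, ENNReal.ofReal (‖u‖ ^ 2) ∂Q < ⊤)
    (f : Ed d → ℝ) (hf : IsEpsKPDTM Q h k ε f) :
    ∀ x : Ed d,
      |f x - Metric.infDist x M| ≤
        2 * c ^ (-(1 : ℝ) / (d' + 2)) *
          Real.sqrt (∫ u, f u ^ 2 ∂P) ^ ((2 : ℝ) / (d' + 2))
        + 2 * Real.sqrt (∫ u, f u ^ 2 ∂P)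
        + Wdist 2 P Q * h ^ (-(1 : ℝ) / 2) := by
  obtain ⟨t, μ, hcen, -, hform⟩ := hf
  have : Nonempty (Fin k) := ⟨⟨0, hk⟩⟩
  have hv : ∀ i, 0 ≤ mVar (μ i) := fun i => integral_nonneg fun _ => sq_nonneg _
  have hfpow : f = powerDist (fun i => mMean (μ i)) (fun i => mVar (μ i)) := funext hform
  have hlip : LipschitzWith 1 f := hfpow ▸ lipschitzWith_powerDist hv
  have hM : ∀ᵐ u ∂P, u ∈ M := (mem_ae_iff_prob_eq_one hMcpt.isClosed.measurableSet).2 hPM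
  have hP : MemLp id 2 P := memLp_id_of_ae_mem_isCompact hMcpt hM 2
  have hQ : MemLp id 2 Q := memLp_id_two_of_lintegral_norm_sq_lt_top hQ2
  have hf2 : Integrable (fun u => f u ^ 2) P := by
    rw [← Measure.restrict_eq_self_of_ae_mem hM]
    exact (hlip.continuous.pow 2).continuousOn.integrableOn_compact hMcpt
  intro x
  have hMne : M.Nonempty := nonempty_of_measure_ne_zero (μ := P) (by simp [hPM])
  have hupper := hlip.le_add_infDist hMne
    (fun p hp => hlip.le_of_min_le_measure_closedBall hf2 hc (by linarith) (hstd p hp)) x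
  obtain ⟨i, hi⟩ :=
    exists_powerDist_eq (m := fun i => mMean (μ i)) (v := fun i => mVar (μ i)) x
  have hlower : infDist x M ≤ f x + h ^ (-(1 : ℝ) / 2) * Wdist 2 P Q := by
    refine (infDist_le_of_mem_plocExt hQ hh.1 (hcen i) M x).trans ?_
    rw [hfpow, hi]
    gcongr
    · exact Real.rpow_nonneg hh.1.le _
    · exact sqrt_integral_infDist_sq_le_Wdist hM hP hQ
  have hW : 0 ≤ Wdist 2 P Q * h ^ (-(1 : ℝ) / 2) :=
    mul_nonneg (Wdist_nonneg 2 P Q) (Real.rpow_nonneg hh.1.le _)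
  have hgrowth : 0 ≤ 2 * c ^ (-(1 : ℝ) / (d' + 2)) *
      Real.sqrt (∫ u, f u ^ 2 ∂P) ^ ((2 : ℝ) / (d' + 2)) + 2 * Real.sqrt (∫ u, f u ^ 2 ∂P) := by
    positivity
  rw [abs_sub_le_iff]
  constructor <;> linarith [mul_comm (h ^ (-(1 : ℝ) / 2)) (Wdist 2 P Q)]

/-- geometric inference with the `k`-PDTM: uniform closeness of an approximate
`k`-PDTM to the distance to the support. -/
theorem stmt_14 {d : ℕ} (h : ℝ) (hh : h ∈ Set.Ioo (0:ℝ) 1) (k : ℕ) (hk : 1 ≤ k)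
    (ε d' K : ℝ) (hε : 0 < ε) (hd' : 0 < d') (hK : 0 < K)
    (M : Set (Ed d)) (hMcpt : IsCompact M) (hMK : M ⊆ ball (0 : Ed d) K)
    (P : Measure (Ed d)) [IsProbabilityMeasure P] (hPM : P M = 1)
    (c : ℝ) (hc : 0 < c)
    (hstd : ∀ p ∈ M, ∀ r : ℝ, 0 < r →
      min (ENNReal.ofReal (c * r ^ d')) 1 ≤ P (closedBall p r))
    (Q : Measure (Ed d)) [IsProbabilityMeasure Q]
    (hQ2 : ∫⁻ u, ENNReal.ofReal (‖u‖ ^ 2) ∂Q < ⊤)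
    (f : Ed d → ℝ) (hf : IsEpsKPDTM Q h k ε f) :
    ∀ x : Ed d,
      |f x - Metric.infDist x M| ≤
        2 * c ^ (-(1 : ℝ) / (d' + 2)) *
          Real.sqrt (∫ u, f u ^ 2 ∂P) ^ ((2 : ℝ) / (d' + 2))
        + 2 * Real.sqrt (∫ u, f u ^ 2 ∂P)
        + Wdist 2 P Q * h ^ (-(1 : ℝ) / 2) :=
  stmt_14_general h hh k hk ε d' hd' M hMcpt P hPM c hc hstd Q hQ2 f hf
end
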